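/- Let x be a sequence of length m with distinct elements, i ∈ {1,...,m-1} with x[i] > x[i+1], and y = τ(x,i). Then SN_y[i] = SN_x[i] + SN_x[i+1] - 1 and SN_y[i+1] = 0. -/

import Mathlib

/-- Binary tree shapes (Cartesian trees are determined by their shape). -/
inductive BTree : Type
  | nil : BTree
  | node : BTree → BTree → BTree
deriving DecidableEq

namespace BTree

/-- Number of nodes. -/
def size : BTree → ℕ
  | nil => 0
  | node l r => size l + size r + 1

/-- Length of the leftmost path. -/
def LMP : BTree → ℕ
  | nil => 0
  | node l _ => LMP l + 1

/-- Length of the rightmost path. -/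
def RMP : BTree → ℕ
  | nil => 0
  | node _ r => RMP r + 1

end BTree

/-- Minimum value of a list (0 for the empty list). -/
def listMin : List ℤ → ℤ
  | [] => 0
  | a :: t => t.foldl min a

/-- Index (0-based) of the minimum of a list. -/
def minIdx (l : List ℤ) : ℕ := l.idxOf (listMin l)

/-- Cartesian tree of a list, with fuel for termination. -/
def ctreeAux : ℕ → List ℤ → BTree
  | 0, _ => .nil
  | _ + 1, [] => .nil
  | n + 1, a :: t =>
      let g := minIdx (a :: t)
      .node (ctreeAux n ((a :: t).take g)) (ctreeAux n ((a :: t).drop (g + 1)))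

/-- Cartesian tree of a list: the root is the position of the minimum,
its subtrees are the Cartesian trees of the prefix and suffix around it. -/
def ctreeL (l : List ℤ) : BTree := ctreeAux l.length l

/-- The factor x[a..b] (1-based positions) of a sequence, as a list. -/
def seqList (x : ℕ → ℤ) (a b : ℕ) : List ℤ :=
  (List.range (b + 1 - a)).map (fun k => x (a + k))

/-- Cartesian tree of the sequence x[1..m]. -/
def ctreeOf (m : ℕ) (x : ℕ → ℤ) : BTree := ctreeL (seqList x 1 m)

/-- Positions j < h (1-based) with x[j] < x[h]. -/
def PDset (x : ℕ → ℤ) (h : ℕ) : Finset ℕ :=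
  (Finset.Ico 1 h).filter (fun j => x j < x h)

/-- Parent-distance table: PD_x[h] = h - max{j < h : x[j] < x[h]}, 0 if no such j. -/
def PD (x : ℕ → ℤ) (h : ℕ) : ℕ :=
  if hs : (PDset x h).Nonempty then h - (PDset x h).max' hs else 0

/-- Positions h < j ≤ m with x[j] < x[h]. -/
def RPDset (m : ℕ) (x : ℕ → ℤ) (h : ℕ) : Finset ℕ :=
  (Finset.Ioc h m).filter (fun j => x j < x h)

/-- Reverse parent-distance table: RPD_x[h] = min{j > h : x[j] < x[h]} - h, 0 if no such j. -/
def RPD (m : ℕ) (x : ℕ → ℤ) (h : ℕ) : ℕ :=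
  if hs : (RPDset m x h).Nonempty then (RPDset m x h).min' hs - h else 0

/-- Referent of h: the smallest position j > h with x[j] < x[h], or -1 if none. -/
def refD (m : ℕ) (x : ℕ → ℤ) (h : ℕ) : ℤ :=
  if hs : (RPDset m x h).Nonempty then ((RPDset m x h).min' hs : ℤ) else -1

/-- Skipped-number table: SN_x[h] is the number of nodes on the rightmost path of the
left subtree of node h in C(x), i.e. the number of positions whose referent is h. -/
def SN (m : ℕ) (x : ℕ → ℤ) (h : ℕ) : ℕ :=
  ((Finset.Ico 1 h).filter (fun j => refD m x j = (h : ℤ))).card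

/-- The swap τ(x,i): exchange the entries at positions i and i+1. -/
def swapAt (x : ℕ → ℤ) (i : ℕ) : ℕ → ℤ :=
  fun j => if j = i then x (i + 1) else if j = i + 1 then x i else x j

/-- ng(T,i): the Cartesian trees obtained from a sequence realizing T by one swap
at position i (valid positions are 1 ≤ i ≤ m-1). -/
def ngi (m : ℕ) (T : BTree) (i : ℕ) : Set BTree :=
  { S | 1 ≤ i ∧ i + 1 ≤ m ∧ ∃ x : ℕ → ℤ, Set.InjOn x (Set.Icc 1 m) ∧
        ctreeOf m x = T ∧ S = ctreeOf m (swapAt x i) }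

/-- ng(T): the swap neighbourhood of T. -/
def ng (m : ℕ) (T : BTree) : Set BTree := ⋃ i, ngi m T i

/-- Number of permutations of {1,...,n} whose Cartesian tree is A. -/
noncomputable def permCount (n : ℕ) (A : BTree) : ℕ :=
  Set.ncard { σ : Equiv.Perm (Fin n) |
    ctreeL (List.ofFn (fun k : Fin n => ((σ k : ℕ) : ℤ) + 1)) = A }

/-- Product over all nodes t of A of the size of the subtree rooted at t. -/
def hookProd : BTree → ℕ
  | .nil => 1
  | .node l r => (BTree.node l r).size * hookProd l * hookProd r

/-!
Only the referents of positions j < i can change under the swap, and they change only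
through the two swapped entries. Since x[i+1] < x[i], the referent of i is i+1, and a
position j < i has referent i in τ(x,i) exactly when its referent in x was i or i+1:
in both cases x[i+1] < x[j] and nothing between j and i is smaller than x[j]. In τ(x,i)
the small entry sits at i and shields i+1 from every earlier position.
-/

open Finset

section Referent

variable {m : ℕ} {x : ℕ → ℤ}

lemma refD_eq_coe_iff {h c : ℕ} :
    refD m x h = c ↔ (h < c ∧ c ≤ m ∧ x c < x h) ∧ ∀ k, h < k → k < c → x h ≤ x k := by
  have mem : ∀ k, k ∈ RPDset m x h ↔ h < k ∧ k ≤ m ∧ x k < x h := fun k => by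
    simp [RPDset, and_assoc]
  have least : IsLeast (RPDset m x h : Set ℕ) c ↔
      (h < c ∧ c ≤ m ∧ x c < x h) ∧ ∀ k, h < k → k < c → x h ≤ x k := by
    simp only [IsLeast, lowerBounds, Set.mem_ofPred_eq, mem_coe, mem]
    refine and_congr_right fun ⟨_, hcm, _⟩ => ⟨fun hlow k hhk hkc => ?_, fun hmin k hk => ?_⟩
    · by_contra! hlt
      exact absurd (hlow ⟨hhk, by omega, hlt⟩) (by omega)
    · by_contra! hlt
      exact absurd (hmin k hk.1 hlt) (not_le.2 hk.2.2)
  rw [← least]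
  unfold refD
  split_ifs with hs
  · rw [Nat.cast_inj]
    exact ⟨fun hc => hc ▸ (RPDset m x h).isLeast_min' hs,
      fun hc => ((RPDset m x h).isLeast_min' hs).unique hc⟩
  · exact iff_of_false (fun hc => by omega) fun hc => hs ⟨c, hc.1⟩

lemma refD_of_succ_lt {h : ℕ} (hm : h + 1 ≤ m) (hlt : x (h + 1) < x h) :
    refD m x h = (h + 1 : ℕ) :=
  refD_eq_coe_iff.2 ⟨⟨by omega, hm, hlt⟩, fun k hk hk' => by omega⟩

lemma SN_succ_of_refD {h : ℕ} (hh : 1 ≤ h) (href : refD m x h = (h + 1 : ℕ)) :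
    SN m x (h + 1) = #{j ∈ Ico 1 h | refD m x j = (h + 1 : ℕ)} + 1 := by
  rw [SN, Nat.Ico_succ_right_eq_insert_Ico hh, filter_insert, if_pos href,
    card_insert_of_notMem (by simp)]

end Referent

section Swap

variable {x : ℕ → ℤ} {i : ℕ}

@[simp] lemma swapAt_left : swapAt x i i = x (i + 1) := by simp [swapAt]

@[simp] lemma swapAt_right : swapAt x i (i + 1) = x i := by simp [swapAt]

lemma swapAt_of_lt {j : ℕ} (hj : j < i) : swapAt x i j = x j := by
  simp [swapAt, hj.ne, show j ≠ i + 1 by omega]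

lemma refD_swapAt_eq_left_iff {m j : ℕ} (him : i + 1 ≤ m) (hgt : x (i + 1) < x i) (hj : j < i) :
    refD m (swapAt x i) j = i ↔ refD m x j = i ∨ refD m x j = (i + 1 : ℕ) := by
  have between : ∀ k, j < k → k < i → (x j ≤ swapAt x i k ↔ x j ≤ x k) :=
    fun k _ hk => by rw [swapAt_of_lt hk]
  simp only [refD_eq_coe_iff, swapAt_left, swapAt_of_lt hj]
  constructor
  · rintro ⟨⟨-, -, hsmall⟩, hmin⟩
    have hmin' k (hjk : j < k) (hki : k < i) : x j ≤ x k := (between k hjk hki).1 (hmin k hjk hki)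
    by_cases hxi : x i < x j
    · exact .inl ⟨⟨hj, by omega, hxi⟩, hmin'⟩
    · refine .inr ⟨⟨by omega, him, hsmall⟩, fun k hjk hki => ?_⟩
      rcases Nat.lt_succ_iff_lt_or_eq.1 hki with hki | rfl
      exacts [hmin' k hjk hki, not_lt.1 hxi]
  · rintro (⟨⟨-, -, hsmall⟩, hmin⟩ | ⟨⟨-, -, hsmall⟩, hmin⟩)
    · exact ⟨⟨hj, by omega, hgt.trans hsmall⟩,
        fun k hjk hki => (between k hjk hki).2 (hmin k hjk hki)⟩
    · exact ⟨⟨hj, by omega, hsmall⟩,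
        fun k hjk hki => (between k hjk hki).2 (hmin k hjk (by omega))⟩

lemma SN_swapAt_right {m : ℕ} (hgt : x (i + 1) < x i) : SN m (swapAt x i) (i + 1) = 0 := by
  refine card_eq_zero.2 (filter_eq_empty_iff.2 fun j hj href => ?_)
  obtain ⟨⟨-, -, hsmall⟩, hmin⟩ := refD_eq_coe_iff.1 href
  rcases Nat.lt_succ_iff_lt_or_eq.1 (mem_Ico.1 hj).2 with hji | rfl
  · have := hmin i hji (by omega)
    rw [swapAt_right, swapAt_left, swapAt_of_lt hji] at *
    omega
  · rw [swapAt_right, swapAt_left] at hsmall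
    exact hgt.not_gt hsmall

lemma SN_swapAt_left {m : ℕ} (hi : 1 ≤ i) (him : i + 1 ≤ m) (hgt : x (i + 1) < x i) :
    SN m (swapAt x i) i = SN m x i + SN m x (i + 1) - 1 := by
  have hdisj : Disjoint {j ∈ Ico 1 i | refD m x j = i}
      {j ∈ Ico 1 i | refD m x j = (i + 1 : ℕ)} :=
    disjoint_filter.2 fun _ _ h h' => by rw [h] at h'; omega
  rw [SN_succ_of_refD hi (refD_of_succ_lt him hgt), SN, SN,
    filter_congr fun j hj => refD_swapAt_eq_left_iff him hgt (mem_Ico.1 hj).2,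
    filter_or, card_union_of_disjoint hdisj]
  omega

end Swap

theorem stmt18_general (m i : ℕ) (x : ℕ → ℤ)
    (hi1 : 1 ≤ i) (him : i + 1 ≤ m) (hgt : x (i + 1) < x i) :
    SN m (swapAt x i) i = SN m x i + SN m x (i + 1) - 1 ∧
    SN m (swapAt x i) (i + 1) = 0 :=
  ⟨SN_swapAt_left hi1 him hgt, SN_swapAt_right hgt⟩

theorem stmt18 (m i : ℕ) (x : ℕ → ℤ) (hx : Set.InjOn x (Set.Icc 1 m))
    (hi1 : 1 ≤ i) (him : i + 1 ≤ m) (hgt : x (i + 1) < x i) :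
    SN m (swapAt x i) i = SN m x i + SN m x (i + 1) - 1 ∧
    SN m (swapAt x i) (i + 1) = 0 :=
  stmt18_general m i x hi1 him hgt
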